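/- arXiv:1108.3798 — 4 statements merged into one kernel-verified Lean document; each statement's English description precedes it below -/
import Mathlib

section
/- Suppose there exist x ∈ X, y0, y1 ∈ Ȳ, and t ∈ (0,1) with p := (1−t)·D_x b(x, y0) + t·D_x b(x, y1) ∉ D_x b(x, Ȳ). If v0, v1 are b-convex functions differentiable at x with Dv_i(x) = D_x b(x, y_i) for i = 0, 1, then the convex combination v_t := (1−t)·v0 + t·v1 is not b-convex. In particular, the set of b-convex functions is not convex. -/
/-!
If `u` is `b`-convex with price schedule `v` and differentiable at `x`, the supremum of the upper
semicontinuous function `b(x, ·) - v` over the compact set `Ȳ` is attained at some `ȳ`; then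
`u - b(·, ȳ)` is minimal at `x` on the open set `X`, so `Du(x) = D_x b(x, ȳ)`. The derivative of
`(1 - t) v₀ + t v₁` at `x` is `p`, which is not of this form, and `v₀, v₁` themselves witness that
the set of `b`-convex functions is not convex.
-/

/-- `u` is `b`-convex on `X` (with goods `Ȳ`): `u(x) = sup_{y ∈ Ȳ} (b(x,y) - v(y))` for some
lower semicontinuous price schedule `v : Ȳ → ℝ ∪ {+∞}`, not identically `+∞`. -/
def BConvexOn (m n : ℕ) (X : Set (Fin m → ℝ)) (Ybar : Set (Fin n → ℝ))
    (b : (Fin m → ℝ) → (Fin n → ℝ) → ℝ) (u : (Fin m → ℝ) → ℝ) : Prop :=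
  ∃ v : (Fin n → ℝ) → EReal, LowerSemicontinuousOn v Ybar ∧ (∀ y, v y ≠ ⊥) ∧
    (∃ y ∈ Ybar, v y ≠ ⊤) ∧
    ∀ x ∈ X, IsLUB {r : ℝ | ∃ y ∈ Ybar, (r : EReal) = (b x y : EReal) - v y} (u x)

lemma upperSemicontinuousOn_coe_sub {β : Type*} [TopologicalSpace β] {K : Set β} {f : β → ℝ}
    {v : β → EReal} (hf : ContinuousOn f K) (hv : LowerSemicontinuousOn v K) :
    UpperSemicontinuousOn (fun y => (f y : EReal) - v y) K := by
  intro y hy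
  have hf' : UpperSemicontinuousWithinAt (fun y => (f y : EReal)) K y :=
    (continuous_coe_real_ereal.comp_continuousOn hf).upperSemicontinuousOn y hy
  have hv' : UpperSemicontinuousWithinAt (fun y => -v y) K y :=
    continuous_neg.comp_lowerSemicontinuousOn_antitone hv EReal.neg_strictAnti.antitone y hy
  exact hf'.add' hv'
    (EReal.continuousAt_add (.inl (EReal.coe_ne_top _)) (.inl (EReal.coe_ne_bot _)))

lemma exists_eq_coe_sub_of_isLUB {β : Type*} [TopologicalSpace β] {K : Set β} {f : β → ℝ}
    {v : β → EReal} {s : ℝ} (hK : IsCompact K) (hf : ContinuousOn f K)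
    (hv : LowerSemicontinuousOn v K) (hv_bot : ∀ y ∈ K, v y ≠ ⊥)
    (hs : IsLUB {r : ℝ | ∃ y ∈ K, (r : EReal) = f y - v y} s) :
    ∃ y ∈ K, v y = ((f y - s : ℝ) : EReal) := by
  obtain ⟨r₀, y₀, hy₀, hr₀⟩ := hs.nonempty
  obtain ⟨y, hy, hmaxOn⟩ := (upperSemicontinuousOn_coe_sub hf hv).exists_isMaxOn ⟨y₀, hy₀⟩ hK
  have hmax : ∀ y' ∈ K, (f y' : EReal) - v y' ≤ f y - v y := isMaxOn_iff.mp hmaxOn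
  have hv_top : v y ≠ ⊤ := by
    intro htop
    have := hmax y₀ hy₀
    rw [htop, EReal.sub_top, ← hr₀] at this
    exact EReal.coe_ne_bot r₀ (le_bot_iff.mp this)
  lift v y to ℝ using ⟨hv_top, hv_bot y hy⟩ with w hw
  have hgreatest : IsGreatest {r : ℝ | ∃ y ∈ K, (r : EReal) = f y - v y} (f y - w) := by
    refine ⟨⟨y, hy, by rw [← hw, EReal.coe_sub]⟩, ?_⟩
    rintro r ⟨y', hy', hr⟩
    have := hmax y' hy'
    rw [← hr, ← EReal.coe_sub] at this
    exact_mod_cast this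
  refine ⟨y, hy, ?_⟩
  rw [← hw, hs.unique hgreatest.isLUB, sub_sub_cancel]

lemma fderiv_eq_of_isLocalMin_sub {E : Type*} [NormedAddCommGroup E] [NormedSpace ℝ E]
    {f g : E → ℝ} {x : E} (hmin : IsLocalMin (fun x' => f x' - g x') x)
    (hf : DifferentiableAt ℝ f x) (hg : DifferentiableAt ℝ g x) :
    fderiv ℝ f x = fderiv ℝ g x := by
  have := hmin.fderiv_eq_zero
  rwa [fderiv_fun_sub hf hg, sub_eq_zero] at this

lemma BConvexOn.fderiv_mem_image {m n : ℕ} {X : Set (Fin m → ℝ)} {Ybar : Set (Fin n → ℝ)}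
    {b : (Fin m → ℝ) → (Fin n → ℝ) → ℝ} {u : (Fin m → ℝ) → ℝ} {x : Fin m → ℝ}
    (hu : BConvexOn m n X Ybar b u) (hXo : IsOpen X) (hYc : IsCompact Ybar)
    (hb : ContinuousOn (b x) Ybar)
    (hbx : ∀ y ∈ Ybar, DifferentiableAt ℝ (fun x' => b x' y) x)
    (hx : x ∈ X) (hd : DifferentiableAt ℝ u x) :
    fderiv ℝ u x ∈ (fun y => fderiv ℝ (fun x' => b x' y) x) '' Ybar := by
  obtain ⟨v, hv, hv_bot, -, hlub⟩ := hu
  obtain ⟨y, hy, hvy⟩ := exists_eq_coe_sub_of_isLUB hYc hb hv (fun y _ => hv_bot y) (hlub x hx)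
  -- `b(·, y) - v y` lies below `u` on `X` and touches it at `x`.
  have hmin : IsMinOn (fun x' => u x' - b x' y) X x := isMinOn_iff.mpr fun x' hx' => by
    have := (hlub x' hx').1 ⟨y, hy, by rw [hvy, ← EReal.coe_sub]⟩
    linarith
  exact ⟨y, hy,
    (fderiv_eq_of_isLocalMin_sub (hmin.isLocalMin (hXo.mem_nhds hx)) hd (hbx y hy)).symm⟩

theorem statement_3_general (m n : ℕ) (X : Set (Fin m → ℝ)) (Ybar : Set (Fin n → ℝ))
    (hXo : IsOpen X) (hYc : IsCompact Ybar)
    (b : (Fin m → ℝ) → (Fin n → ℝ) → ℝ)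
    (hb : Continuous (fun p : (Fin m → ℝ) × (Fin n → ℝ) => b p.1 p.2))
    (hbx : ∀ y ∈ Ybar, Differentiable ℝ (fun x' => b x' y))
    (x : Fin m → ℝ) (hx : x ∈ X)
    (y0 y1 : Fin n → ℝ)
    (t : ℝ) (ht : t ∈ Set.Ioo (0 : ℝ) 1)
    (hp : (1 - t) • fderiv ℝ (fun x' => b x' y0) x + t • fderiv ℝ (fun x' => b x' y1) x ∉
      (fun y => fderiv ℝ (fun x' => b x' y) x) '' Ybar)
    (v0 v1 : (Fin m → ℝ) → ℝ)
    (hv0 : BConvexOn m n X Ybar b v0) (hv1 : BConvexOn m n X Ybar b v1)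
    (hd0 : DifferentiableAt ℝ v0 x) (hd1 : DifferentiableAt ℝ v1 x)
    (hD0 : fderiv ℝ v0 x = fderiv ℝ (fun x' => b x' y0) x)
    (hD1 : fderiv ℝ v1 x = fderiv ℝ (fun x' => b x' y1) x) :
    ¬ BConvexOn m n X Ybar b (fun x' => (1 - t) * v0 x' + t * v1 x') ∧
      ¬ Convex ℝ {u : (Fin m → ℝ) → ℝ | BConvexOn m n X Ybar b u} := by
  have hvt : ¬ BConvexOn m n X Ybar b (fun x' => (1 - t) * v0 x' + t * v1 x') := by
    intro hvt
    have hD : fderiv ℝ (fun x' => (1 - t) * v0 x' + t * v1 x') x =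
        (1 - t) • fderiv ℝ (fun x' => b x' y0) x + t • fderiv ℝ (fun x' => b x' y1) x := by
      rw [fderiv_fun_add (hd0.const_mul _) (hd1.const_mul _), fderiv_const_mul hd0,
        fderiv_const_mul hd1, hD0, hD1]
    refine hp (hD ▸ hvt.fderiv_mem_image hXo hYc ?_ (fun y hy => (hbx y hy) x) hx ?_)
    · exact (hb.comp (Continuous.prodMk_right x)).continuousOn
    · exact (hd0.const_mul _).add (hd1.const_mul _)
  refine ⟨hvt, fun hconv => hvt ?_⟩
  exact hconv hv0 hv1 (sub_nonneg.mpr ht.2.le) ht.1.le (sub_add_cancel 1 t)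

/-- If `Ȳ` fails to be `b`-convex at some `x ∈ X` (i.e. some convex combination
`p = (1-t) D_x b(x,y0) + t D_x b(x,y1)` is not in `D_x b(x,Ȳ)`), and `v0, v1` are `b`-convex
functions differentiable at `x` with `Dv_i(x) = D_x b(x,y_i)`, then `(1-t) v0 + t v1` is not
`b`-convex; in particular the set of `b`-convex functions is not convex. -/
theorem statement_3 (m n : ℕ) (X : Set (Fin m → ℝ)) (Ybar : Set (Fin n → ℝ))
    (hXo : IsOpen X) (hYc : IsCompact Ybar)
    (b : (Fin m → ℝ) → (Fin n → ℝ) → ℝ)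
    (hb : Continuous (fun p : (Fin m → ℝ) × (Fin n → ℝ) => b p.1 p.2))
    (hbx : ∀ y ∈ Ybar, Differentiable ℝ (fun x' => b x' y))
    (x : Fin m → ℝ) (hx : x ∈ X)
    (y0 y1 : Fin n → ℝ) (hy0 : y0 ∈ Ybar) (hy1 : y1 ∈ Ybar)
    (t : ℝ) (ht : t ∈ Set.Ioo (0 : ℝ) 1)
    (hp : (1 - t) • fderiv ℝ (fun x' => b x' y0) x + t • fderiv ℝ (fun x' => b x' y1) x ∉
      (fun y => fderiv ℝ (fun x' => b x' y) x) '' Ybar)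
    (v0 v1 : (Fin m → ℝ) → ℝ)
    (hv0 : BConvexOn m n X Ybar b v0) (hv1 : BConvexOn m n X Ybar b v1)
    (hd0 : DifferentiableAt ℝ v0 x) (hd1 : DifferentiableAt ℝ v1 x)
    (hD0 : fderiv ℝ v0 x = fderiv ℝ (fun x' => b x' y0) x)
    (hD1 : fderiv ℝ v1 x = fderiv ℝ (fun x' => b x' y1) x) :
    ¬ BConvexOn m n X Ybar b (fun x' => (1 - t) * v0 x' + t * v1 x') ∧
      ¬ Convex ℝ {u : (Fin m → ℝ) → ℝ | BConvexOn m n X Ybar b u} :=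
  statement_3_general m n X Ybar hXo hYc b hb hbx x hx y0 y1 t ht hp v0 v1 hv0 hv1 hd0 hd1 hD0 hD1
end

section
/- Assume the level sets L_x := {x̄ : D_y b(x̄, y) = D_y b(x, y)} are independent of y and connected. Fix y0 ∈ Y and define Q(x) := D_y b(x, y0). Then the function B(x, x̄, y) := b(x,y) − b(x,y0) − b(x̄,y) + b(x̄,y0) vanishes for all y ∈ Y whenever Q(x) = Q(x̄); consequently h(z, y) := b(x, y) − b(x, y0) for any x with Q(x) = z is well defined. -/
theorem IsOpen.sub_sub_sub_eq_zero_of_fderiv_eq {E F : Type*} [NormedAddCommGroup E]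
    [NormedSpace ℝ E] [NormedAddCommGroup F] [NormedSpace ℝ F] {s : Set E} {f g : E → F}
    (hs : IsOpen s) (hs' : IsPreconnected s) (hf : DifferentiableOn ℝ f s)
    (hg : DifferentiableOn ℝ g s) (hfg : ∀ y ∈ s, fderiv ℝ f y = fderiv ℝ g y)
    {y y₀ : E} (hy : y ∈ s) (hy₀ : y₀ ∈ s) : f y - f y₀ - g y + g y₀ = 0 := by
  obtain ⟨a, ha⟩ := hs.exists_eq_add_of_fderiv_eq hs' hf hg hfg
  simp only [ha hy, ha hy₀]
  abel

/-- If the level sets `L_x = {x̄ : D_y b(x̄,y) = D_y b(x,y)}` are independent of `y`, then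
`B(x,x̄,y) = b(x,y) - b(x,y0) - b(x̄,y) + b(x̄,y0)` vanishes for all `y ∈ Y` whenever
`Q(x) = Q(x̄)`, where `Q(x) = D_y b(x,y0)`; hence the effective preference
`h(z,y) := b(x,y) - b(x,y0)` for `x ∈ Q⁻¹(z)` is well defined. -/
theorem statement_7 (m n : ℕ) (X : Set (Fin m → ℝ)) (Y : Set (Fin n → ℝ))
    (hYo : IsOpen Y) (hYc : IsConnected Y)
    (b : (Fin m → ℝ) → (Fin n → ℝ) → ℝ)
    (hC1 : ∀ x ∈ X, ContDiffOn ℝ 1 (b x) Y)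
    (y0 : Fin n → ℝ) (hy0 : y0 ∈ Y)
    (hindep : ∀ x ∈ X, ∀ xb ∈ X, fderiv ℝ (b xb) y0 = fderiv ℝ (b x) y0 →
      ∀ y ∈ Y, fderiv ℝ (b xb) y = fderiv ℝ (b x) y) :
    ∀ x ∈ X, ∀ xb ∈ X, fderiv ℝ (b x) y0 = fderiv ℝ (b xb) y0 →
      ∀ y ∈ Y, b x y - b x y0 - b xb y + b xb y0 = 0 := by
  intro x hx xb hxb hQ y hy
  have hdiff : ∀ x' ∈ X, DifferentiableOn ℝ (b x') Y := fun x' hx' =>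
    (hC1 x' hx').differentiableOn one_ne_zero
  exact hYo.sub_sub_sub_eq_zero_of_fderiv_eq hYc.isPreconnected (hdiff x hx) (hdiff xb hxb)
    (fun z hz => (hindep x hx xb hxb hQ.symm z hz).symm) hy hy0
end

section
/- Let X = [0,1], Y = {0,1}, b(x,y) = xy + y, c(y) = y², with consumer density f(x) = 60x² − 80x + 29 on [0,1] and the null good y = 0 offered at price 0. For a price v ∈ [1,2] charged for good y = 1, the monopolist's profit equals (v − 3/2)² − 20(v − 3/2)⁴ + 1, and this function of v is maximized on [1,2] exactly at the two points v = 3/2 ± 1/(2√10). -/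
/-!
Integrating the density gives the profit in closed form; completing the square in
`t = v - 3/2` writes it as `81/80 - 20 (t² - 1/40)²`, so the maximum `81/80` is attained
exactly where `t² = 1/40`, i.e. at `t = ±1/(2√10)`, and both points lie in `[1, 2]`.
-/

open intervalIntegral

lemma setOf_forall_le_eq_of_le_of_attained {α β : Type*} [PartialOrder β] {f : α → β} {S : Set α}
    {M : β} (hle : ∀ x, f x ≤ M) (hM : ∃ x ∈ S, f x = M) :
    {v ∈ S | ∀ w ∈ S, f w ≤ f v} = {v ∈ S | f v = M} := by
  obtain ⟨x, hxS, hx⟩ := hM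
  ext v
  refine and_congr_right fun _ => ⟨fun hv => (hle v).antisymm (hx ▸ hv x hxS), fun hv w _ => ?_⟩
  exact hv ▸ hle w

lemma sq_inv_two_mul_sqrt_ten : (1 / (2 * Real.sqrt 10)) ^ 2 = 1 / 40 := by
  rw [div_pow, mul_pow, Real.sq_sqrt (by norm_num)]; norm_num

lemma inv_two_mul_sqrt_ten_le_half : 1 / (2 * Real.sqrt 10) ≤ 1 / 2 := by
  gcongr
  linarith [Real.one_lt_sqrt_two, Real.sqrt_le_sqrt (show (2 : ℝ) ≤ 10 by norm_num)]

lemma integral_density (a : ℝ) :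
    ∫ x in a..1, (60 * x ^ 2 - 80 * x + 29 : ℝ) = 9 - (20 * a ^ 3 - 40 * a ^ 2 + 29 * a) := by
  rw [integral_add, integral_sub, integral_const_mul, integral_const_mul, integral_pow, integral_id,
    integral_const]
  · rw [smul_eq_mul]; ring
  all_goals exact (by fun_prop : Continuous _).intervalIntegrable _ _

lemma profit_eq (v : ℝ) :
    (v - 1) * ∫ x in (v - 1)..1, (60 * x ^ 2 - 80 * x + 29 : ℝ)
      = (v - 3 / 2) ^ 2 - 20 * (v - 3 / 2) ^ 4 + 1 := by
  rw [integral_density]; ring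

lemma profit_eq_sub_sq (v : ℝ) :
    (v - 1) * ∫ x in (v - 1)..1, (60 * x ^ 2 - 80 * x + 29 : ℝ)
      = 81 / 80 - 20 * ((v - 3 / 2) ^ 2 - 1 / 40) ^ 2 := by
  rw [profit_eq]; ring

lemma profit_le (v : ℝ) : (v - 1) * ∫ x in (v - 1)..1, (60 * x ^ 2 - 80 * x + 29 : ℝ) ≤ 81 / 80 := by
  rw [profit_eq_sub_sq]
  exact sub_le_self _ (by positivity)

lemma profit_eq_max_iff (v : ℝ) :
    (v - 1) * ∫ x in (v - 1)..1, (60 * x ^ 2 - 80 * x + 29 : ℝ) = 81 / 80 ↔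
      v = 3 / 2 + 1 / (2 * Real.sqrt 10) ∨ v = 3 / 2 - 1 / (2 * Real.sqrt 10) := by
  rw [profit_eq_sub_sq, sub_eq_self, mul_eq_zero, pow_eq_zero_iff two_ne_zero, sub_eq_zero,
    ← sq_inv_two_mul_sqrt_ten, sq_eq_sq_iff_eq_or_eq_neg, sub_eq_iff_eq_add', sub_eq_iff_eq_add',
    ← sub_eq_add_neg]
  norm_num

/-- In the example `X = [0,1]`, goods `{0,1}`, `b(x,y) = xy + y`, `c(y) = y²`, density
`f(x) = 60x² - 80x + 29`: for each price `v ∈ [1,2]` the monopolist's profit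
`(v - c(1)) ∫_{v-1}^1 f(x) dx` equals `(v - 3/2)² - 20(v - 3/2)⁴ + 1`, and this is maximized
over `[1,2]` exactly at the two points `v = 3/2 ± 1/(2√10)`. -/
theorem statement_14 :
    (∀ v ∈ Set.Icc (1 : ℝ) 2,
      (v - 1) * (∫ x in (v - 1)..1, (60 * x ^ 2 - 80 * x + 29))
        = (v - 3 / 2) ^ 2 - 20 * (v - 3 / 2) ^ 4 + 1) ∧
    {v ∈ Set.Icc (1 : ℝ) 2 | ∀ w ∈ Set.Icc (1 : ℝ) 2,
        (w - 1) * (∫ x in (w - 1)..1, (60 * x ^ 2 - 80 * x + 29))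
          ≤ (v - 1) * (∫ x in (v - 1)..1, (60 * x ^ 2 - 80 * x + 29))}
      = {3 / 2 + 1 / (2 * Real.sqrt 10), 3 / 2 - 1 / (2 * Real.sqrt 10)} := by
  refine ⟨fun v _ => profit_eq v, ?_⟩
  have he_pos : 0 < 1 / (2 * Real.sqrt 10) := by positivity
  have he_le := inv_two_mul_sqrt_ten_le_half
  have hmem : ∀ v ∈ ({3 / 2 + 1 / (2 * Real.sqrt 10), 3 / 2 - 1 / (2 * Real.sqrt 10)} : Set ℝ),
      v ∈ Set.Icc (1 : ℝ) 2 := by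
    rintro v (rfl | rfl) <;> constructor <;> linarith
  rw [setOf_forall_le_eq_of_le_of_attained profit_le
    ⟨_, hmem _ (Or.inl rfl), (profit_eq_max_iff _).2 (Or.inl rfl)⟩]
  ext v
  simp only [Set.mem_ofPred_eq, profit_eq_max_iff]
  exact ⟨And.right, fun hv => ⟨hmem v hv, hv⟩⟩
end

section
/- In the setting of Section 5 (n > m), assume level sets L_y = Q^{-1}(Q(y)) with Q(y) := D_x b(x0, y) are independent of x, and define g(w) := inf_{y : Q(y) = w} (c(y) − b(x0, y)). If c is b-convex, i.e. c(y) = sup_{x∈X}(b(x,y) − c^b(x)), then g(w) = sup_{x∈X}(h(x,w) − c^b(x)), where h(x, Q(y)) := b(x,y) − b(x0,y); that is, g is h-convex with g^h = c^b. -/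
/-!
Since `h x (Q y) = b x y - b x0 y`, the `b`-convexity formula for `c y`, shifted by `b x0 y`,
reads `c y - b x0 y = sup_x (h x (Q y) - c^b x)`. The right-hand side only depends on `Q y`, so
`c - b x0` is constant on every level set of `Q`, and its infimum `g w` over the level set
is that constant.
-/

section

variable {α β γ : Type*} {X : Set α} {b : α → β → ℝ} {c : β → ℝ} {cb : α → ℝ}
  {h : α → γ → ℝ} {x0 : α} {y : β} {w : γ}

lemma isLUB_sub_of_isLUB_bConjugate (hh : ∀ x ∈ X, h x w = b x y - b x0 y)
    (hc : IsLUB {r : ℝ | ∃ x ∈ X, r = b x y - cb x} (c y)) :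
    IsLUB {r : ℝ | ∃ x ∈ X, r = h x w - cb x} (c y - b x0 y) := by
  constructor
  · rintro r ⟨x, hx, rfl⟩
    have := hc.1 ⟨x, hx, rfl⟩
    linarith [hh x hx]
  · intro u hu
    suffices c y ≤ u + b x0 y by linarith
    refine hc.2 ?_
    rintro r ⟨x, hx, rfl⟩
    have := hu ⟨x, hx, rfl⟩
    linarith [hh x hx]

end

lemma IsGLB.eq_of_forall_eq {s : Set ℝ} {a r₀ : ℝ} (hs : IsGLB s a) (hr₀ : r₀ ∈ s)
    (hconst : ∀ r ∈ s, r = r₀) : a = r₀ := by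
  have : s = {r₀} := Set.eq_singleton_iff_unique_mem.2 ⟨hr₀, hconst⟩
  exact hs.unique (this ▸ isGLB_singleton)

theorem statement_17_general (m n : ℕ)
    (X : Set (EuclideanSpace ℝ (Fin m))) (Y : Set (EuclideanSpace ℝ (Fin n)))
    (b : EuclideanSpace ℝ (Fin m) → EuclideanSpace ℝ (Fin n) → ℝ)
    (c : EuclideanSpace ℝ (Fin n) → ℝ)
    (x0 : EuclideanSpace ℝ (Fin m))
    (h : EuclideanSpace ℝ (Fin m) → EuclideanSpace ℝ (Fin m) → ℝ)
    (hh : ∀ x ∈ X, ∀ y ∈ Y, h x (gradient (fun x' => b x' y) x0) = b x y - b x0 y)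
    (cb : EuclideanSpace ℝ (Fin m) → ℝ)
    (hbconv : ∀ y ∈ Y, IsLUB {r : ℝ | ∃ x ∈ X, r = b x y - cb x} (c y))
    (g : EuclideanSpace ℝ (Fin m) → ℝ)
    (hg : ∀ w ∈ (fun y => gradient (fun x' => b x' y) x0) '' Y,
      IsGLB {r : ℝ | ∃ y ∈ Y, gradient (fun x' => b x' y) x0 = w ∧ r = c y - b x0 y} (g w)) :
    ∀ w ∈ (fun y => gradient (fun x' => b x' y) x0) '' Y,
      IsLUB {r : ℝ | ∃ x ∈ X, r = h x w - cb x} (g w) := by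
  intro w hw
  obtain ⟨y₀, hy₀, hQy₀⟩ := hw
  have hsup : ∀ y ∈ Y, gradient (fun x' => b x' y) x0 = w →
      IsLUB {r : ℝ | ∃ x ∈ X, r = h x w - cb x} (c y - b x0 y) := fun y hy hQy =>
    isLUB_sub_of_isLUB_bConjugate (fun x hx => hQy ▸ hh x hx y hy) (hbconv y hy)
  have hgw : g w = c y₀ - b x0 y₀ := by
    refine (hg w ⟨y₀, hy₀, hQy₀⟩).eq_of_forall_eq ⟨y₀, hy₀, hQy₀, rfl⟩ ?_
    rintro r ⟨y, hy, hQy, rfl⟩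
    exact (hsup y hy hQy).unique (hsup y₀ hy₀ hQy₀)
  exact hgw ▸ hsup y₀ hy₀ hQy₀

/-- Section 5 setting (`n > m`): with `Q(y) = D_x b(x0,y)`, `W = Q(Y)`,
`h(x,Q(y)) = b(x,y) - b(x0,y)` well defined, and
`g(w) = inf_{y : Q(y) = w} (c(y) - b(x0,y))`: if `c` is `b`-convex
(`c(y) = sup_{x∈X} (b(x,y) - c^b(x))`), then `g(w) = sup_{x∈X} (h(x,w) - c^b(x))`,
i.e. `g` is `h`-convex with `g^h = c^b`. -/
theorem statement_17 (m n : ℕ) (hnm : m < n)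
    (X : Set (EuclideanSpace ℝ (Fin m))) (Y : Set (EuclideanSpace ℝ (Fin n)))
    (b : EuclideanSpace ℝ (Fin m) → EuclideanSpace ℝ (Fin n) → ℝ)
    (c : EuclideanSpace ℝ (Fin n) → ℝ)
    (x0 : EuclideanSpace ℝ (Fin m)) (hx0 : x0 ∈ X)
    (h : EuclideanSpace ℝ (Fin m) → EuclideanSpace ℝ (Fin m) → ℝ)
    (hh : ∀ x ∈ X, ∀ y ∈ Y, h x (gradient (fun x' => b x' y) x0) = b x y - b x0 y)
    (cb : EuclideanSpace ℝ (Fin m) → ℝ)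
    (hcb : ∀ x ∈ X, IsLUB {r : ℝ | ∃ y ∈ Y, r = b x y - c y} (cb x))
    (hbconv : ∀ y ∈ Y, IsLUB {r : ℝ | ∃ x ∈ X, r = b x y - cb x} (c y))
    (g : EuclideanSpace ℝ (Fin m) → ℝ)
    (hg : ∀ w ∈ (fun y => gradient (fun x' => b x' y) x0) '' Y,
      IsGLB {r : ℝ | ∃ y ∈ Y, gradient (fun x' => b x' y) x0 = w ∧ r = c y - b x0 y} (g w)) :
    ∀ w ∈ (fun y => gradient (fun x' => b x' y) x0) '' Y,
      IsLUB {r : ℝ | ∃ x ∈ X, r = h x w - cb x} (g w) :=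
  statement_17_general m n X Y b c x0 h hh cb hbconv g hg
end
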